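/- Let G be a finite group and U, V subgroups with V = U^n for some n ∈ G, and suppose G = UVUV. Then for every h in the normalizer of both U and V, one has hn ∈ UVU. -/

import Mathlib

open scoped Pointwise

/-- If `G = UVUV` where `V = Uⁿ`, then for every `h` normalizing both `U` and `V`,
`hn ∈ UVU`. -/
theorem hn_mem_UVU {G : Type*} [Group G] [Finite G] (U V : Subgroup G) (n h : G)
    (hV : ∀ x, x ∈ V ↔ n * x * n⁻¹ ∈ U)
    (hG : ((U : Set G) * (V : Set G) * (U : Set G) * (V : Set G)) = Set.univ)
    (hhU : h ∈ Subgroup.normalizer (U : Set G)) (hhV : h ∈ Subgroup.normalizer (V : Set G)) :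
    h * n ∈ ((U : Set G) * (V : Set G) * (U : Set G)) := by
  have hmem : h * n ∈ ((U : Set G) * (V : Set G) * (U : Set G) * (V : Set G)) := by
    rw [hG]; trivial
  obtain ⟨x, hx, v₂, hv₂, heq⟩ := hmem
  obtain ⟨y, hy, u₂, hu₂, rfl⟩ := hx
  obtain ⟨u₁, hu₁, v₁, hv₁, rfl⟩ := hy
  -- u' = n * v₂⁻¹ * n⁻¹ ∈ U
  have hu' : n * v₂⁻¹ * n⁻¹ ∈ U := (hV v₂⁻¹).mp (inv_mem hv₂)
  -- u'' = h * u' * h⁻¹ ∈ U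
  have hu'' : h * (n * v₂⁻¹ * n⁻¹) * h⁻¹ ∈ U :=
    (Subgroup.mem_normalizer_iff.mp hhU _).mp hu'
  set u'' := h * (n * v₂⁻¹ * n⁻¹) * h⁻¹ with hu''def
  have key : u'' * (h * n) = u₁ * v₁ * u₂ := by
    have : (h * n) * v₂⁻¹ = u'' * (h * n) := by rw [hu''def]; group
    rw [← this, ← heq]; group
  refine ⟨u''⁻¹ * u₁ * v₁, ⟨u''⁻¹ * u₁, mul_mem (inv_mem hu'') hu₁, v₁, hv₁, rfl⟩,
    u₂, hu₂, ?_⟩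
  have : h * n = u''⁻¹ * (u₁ * v₁ * u₂) := by
    rw [← key]; group
  rw [this]; group
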